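/- Let f be a topological flow on a closed topological n-manifold M and let p be a topologically hyperbolic fixed point of f of index λ_p. Then there exists an injective continuous map J : ℝ^{λ_p} → M such that J(ℝ^{λ_p}) = W^u_p and J is an immersion: every point x ∈ ℝ^{λ_p} has a neighborhood U_x such that the restriction of J to U_x is a homeomorphism onto its image (with the subspace topology from M). -/

import Mathlib

/-
In the chart `h : U ≃ₜ ℝⁿ` around `p` the flow is conjugate to the linear model flow, which is
defined for all times. Comparing the two flows along an orbit, the set of times at which
`f t y = h⁻¹ (a^t (h y))` holds is closed, and open by the group law of both flows, so it is all
of `ℝ`: orbits through `U` never leave `U`. Hence `W^u_p` is the preimage under `h` of the unstable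
subspace `ℝ^λ × 0` of the model flow, and `J = h⁻¹ ∘ (x ↦ (x, 0))` is an embedding onto it.
-/

open Filter Topology Set

/-- The model linear flow `a^t_λ` on `ℝ^n`. -/
noncomputable def modelFlow (n lam : ℕ) (t : ℝ) (x : Fin n → ℝ) : Fin n → ℝ :=
  fun i => if (i : ℕ) < lam then (2 : ℝ) ^ t * x i else (2 : ℝ) ^ (-t) * x i

/-- An `ε`-chain of length `T` from `x` to `y` for the flow `f`. -/
def IsEpsChain {M : Type*} [MetricSpace M] (f : ℝ → M → M) (ε T : ℝ) (x y : M) : Prop :=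
  ∃ (m : ℕ) (xs : ℕ → M) (ts : ℕ → ℝ), 0 < m ∧ xs 0 = x ∧ xs m = y ∧
    (∀ i ∈ Finset.Icc 1 m, 1 ≤ ts i ∧ dist (f (ts i) (xs (i - 1))) (xs i) < ε) ∧
    ∑ i ∈ Finset.Icc 1 m, ts i = T

/-- A point is chain recurrent if for every `ε > 0` there is an `ε`-chain of some
length `T` from the point to itself. -/
def IsChainRecurrent {M : Type*} [MetricSpace M] (f : ℝ → M → M) (x : M) : Prop :=
  ∀ ε > 0, ∃ T > 0, IsEpsChain f ε T x x

/-- The stable manifold `W^s_p`. -/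
def stableSet {M : Type*} [TopologicalSpace M] (f : ℝ → M → M) (p : M) : Set M :=
  {y | Tendsto (fun t : ℝ => f t y) atTop (nhds p)}

/-- The unstable manifold `W^u_p`. -/
def unstableSet {M : Type*} [TopologicalSpace M] (f : ℝ → M → M) (p : M) : Set M :=
  {y | Tendsto (fun t : ℝ => f (-t) y) atTop (nhds p)}

/-- `p` is a topologically hyperbolic fixed point of index `lam` of the flow `f`. -/
def IsTopHyperbolicFixedPt {M : Type*} [TopologicalSpace M] (n : ℕ) (f : ℝ → M → M)
    (p : M) (lam : ℕ) : Prop :=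
  lam ≤ n ∧ (∀ t : ℝ, f t p = p) ∧
  ∃ (U : Set M) (_ : IsOpen U) (hp : p ∈ U) (h : U ≃ₜ (Fin n → ℝ)),
    h ⟨p, hp⟩ = 0 ∧
    ∀ (t : ℝ) (y : M) (hy : y ∈ U) (hfy : ∀ s ∈ Set.uIcc (0 : ℝ) t, f s y ∈ U),
      (h ⟨f t y, hfy t Set.right_mem_uIcc⟩ : Fin n → ℝ) = modelFlow n lam t (h ⟨y, hy⟩)

/-- `p` is a regular point of `φ` (in the sense of continuous Morse theory). -/
def IsRegularPoint {M : Type*} [TopologicalSpace M] (n : ℕ) (φ : M → ℝ) (p : M) : Prop :=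
  ∃ (V : Set M) (_ : IsOpen V) (hp : p ∈ V) (ψ : V ≃ₜ (Fin n → ℝ)) (j : Fin n),
    (j : ℕ) + 1 = n ∧ ψ ⟨p, hp⟩ = 0 ∧ ∀ y : V, φ y = φ p + ψ y j

/-- `p` is a non-degenerate critical point of `φ` of index `ν`. -/
def IsNondegenerateCriticalPoint {M : Type*} [TopologicalSpace M] (n : ℕ) (φ : M → ℝ)
    (p : M) (ν : ℕ) : Prop :=
  ν ≤ n ∧ ¬ IsRegularPoint n φ p ∧
  ∃ (V : Set M) (_ : IsOpen V) (hp : p ∈ V) (ψ : V ≃ₜ (Fin n → ℝ)),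
    ψ ⟨p, hp⟩ = 0 ∧
    ∀ y : V, φ y = φ p
      - ∑ i ∈ Finset.univ.filter (fun i : Fin n => (i : ℕ) < ν), (ψ y i) ^ 2
      + ∑ i ∈ Finset.univ.filter (fun i : Fin n => ν ≤ (i : ℕ)), (ψ y i) ^ 2

/-- `M` is locally Euclidean of dimension `n` (every point has a neighborhood
homeomorphic to `ℝ^n`). -/
def LocallyEuclidean (n : ℕ) (M : Type*) [TopologicalSpace M] : Prop :=
  ∀ p : M, ∃ U : Set M, IsOpen U ∧ p ∈ U ∧ Nonempty (U ≃ₜ (Fin n → ℝ))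

section Conjugacy

variable {M E : Type*} [TopologicalSpace M] [TopologicalSpace E]

def IsChartConj (f : ℝ → M → M) (U : Set M) (h : U ≃ₜ E) (g : ℝ → E → E) : Prop :=
  ∀ (t : ℝ) (y : M) (hy : y ∈ U) (hfy : ∀ s ∈ uIcc (0 : ℝ) t, f s y ∈ U),
    h ⟨f t y, hfy t right_mem_uIcc⟩ = g t (h ⟨y, hy⟩)

theorem IsChartConj.flow_eq [T2Space M] {f : ℝ → M → M} {g : ℝ → E → E} {U : Set M}
    {h : U ≃ₜ E} (hconj : IsChartConj f U h g)
    (hf_cont : Continuous fun q : ℝ × M => f q.1 q.2) (hf_zero : ∀ x, f 0 x = x)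
    (hf_add : ∀ s t : ℝ, ∀ x, f t (f s x) = f (t + s) x)
    (hg_cont : ∀ z, Continuous fun t => g t z)
    (hg_add : ∀ s t : ℝ, ∀ z, g t (g s z) = g (t + s) z)
    (hU : IsOpen U) {y : M} (hy : y ∈ U) (t : ℝ) :
    f t y = h.symm (g t (h ⟨y, hy⟩)) := by
  have chart_eq : ∀ x (hx : x ∈ U) r, (∀ s ∈ uIcc (0 : ℝ) r, f s x ∈ U) →
      f r x = h.symm (g r (h ⟨x, hx⟩)) := fun x hx r hr => by
    rw [← hconj r x hx hr, Homeomorph.symm_apply_apply]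
  set z := h ⟨y, hy⟩
  set S := {t : ℝ | f t y = h.symm (g t z)}
  have hS_closed : IsClosed S :=
    isClosed_eq (hf_cont.comp (continuous_id.prodMk continuous_const))
      (continuous_subtype_val.comp (h.symm.continuous.comp (hg_cont z)))
  have hS_open : IsOpen S := by
    refine isOpen_iff_mem_nhds.2 fun t ht => ?_
    have hyt : f t y ∈ U := ht ▸ (h.symm (g t z)).2
    have hzt : h ⟨f t y, hyt⟩ = g t z := by
      rw [show (⟨f t y, hyt⟩ : U) = h.symm (g t z) from Subtype.ext ht, h.apply_symm_apply]
    -- The times `r` for which the orbit of `f t y` stays in `U` up to time `r` form a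
    -- neighbourhood of `0`: the connected component of `0` in `{r | f r (f t y) ∈ U}`.
    set W := connectedComponentIn {r : ℝ | f r (f t y) ∈ U} 0
    have hW_open : IsOpen W := IsOpen.connectedComponentIn <|
      hU.preimage (hf_cont.comp (continuous_id.prodMk continuous_const))
    have hW0 : (0 : ℝ) ∈ W := mem_connectedComponentIn (by simpa [hf_zero] using hyt)
    have hmem : ∀ r ∈ W, ∀ s ∈ uIcc (0 : ℝ) r, f s (f t y) ∈ U := fun r hr =>
      (isPreconnected_connectedComponentIn.ordConnected.uIcc_subset hW0 hr).trans
        (connectedComponentIn_subset _ _)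
    have hnhds : (fun s => s - t) ⁻¹' W ∈ 𝓝 t :=
      (continuous_id.sub continuous_const).continuousAt.preimage_mem_nhds
        (hW_open.mem_nhds (by simpa using hW0))
    filter_upwards [hnhds] with s hs
    calc f s y = f (s - t) (f t y) := by rw [hf_add, sub_add_cancel]
      _ = h.symm (g (s - t) (g t z)) := by rw [chart_eq _ hyt _ (hmem _ hs), hzt]
      _ = h.symm (g s z) := by rw [hg_add, sub_add_cancel]
  have hS0 : (0 : ℝ) ∈ S := chart_eq y hy 0 fun s hs => by
    rw [uIcc_self, mem_singleton_iff] at hs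
    rwa [hs, hf_zero]
  exact eq_univ_iff_forall.1 (IsClopen.eq_univ ⟨hS_closed, hS_open⟩ ⟨0, hS0⟩) t

theorem unstableSet_eq_image_of_flow_eq {f : ℝ → M → M} {g : ℝ → E → E} {U : Set M}
    (hU : IsOpen U) {p : M} (hp : p ∈ U) (h : U ≃ₜ E) (hf_zero : ∀ x, f 0 x = x)
    (hf_add : ∀ s t : ℝ, ∀ x, f t (f s x) = f (t + s) x)
    (hflow : ∀ y (hy : y ∈ U) t, f t y = h.symm (g t (h ⟨y, hy⟩))) :
    unstableSet f p = (fun z => (h.symm z : M)) '' unstableSet g (h ⟨p, hp⟩) := by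
  ext y
  constructor
  · intro (hy : Tendsto (fun t => f (-t) y) atTop (𝓝 p))
    obtain ⟨T, hT⟩ := (hy.eventually_mem (hU.mem_nhds hp)).exists
    have hyU : y ∈ U := by
      have := hflow _ hT T
      rw [hf_add, add_neg_cancel, hf_zero] at this
      exact this ▸ (h.symm _).2
    refine ⟨h ⟨y, hyU⟩, ?_, by simp⟩
    have hlim : Tendsto (fun t => h.symm (g (-t) (h ⟨y, hyU⟩))) atTop (𝓝 ⟨p, hp⟩) := by
      rw [tendsto_subtype_rng]
      simpa only [← hflow] using hy
    simpa [unstableSet, Function.comp_def] using (h.continuous.tendsto _).comp hlim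
  · rintro ⟨z, hz, rfl⟩
    have hlim := ((continuous_subtype_val.comp h.symm.continuous).tendsto _).comp hz
    simp only [Function.comp_def, Homeomorph.symm_apply_apply] at hlim
    simpa only [unstableSet, mem_ofPred_eq, hflow _ (h.symm z).2, Subtype.coe_eta,
      Homeomorph.apply_symm_apply] using hlim

end Conjugacy

theorem modelFlow_add (n lam : ℕ) (s t : ℝ) (x : Fin n → ℝ) :
    modelFlow n lam t (modelFlow n lam s x) = modelFlow n lam (t + s) x := by
  funext i
  by_cases hi : (i : ℕ) < lam <;>
    simp only [modelFlow, hi, if_true, if_false, ← mul_assoc, neg_add,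
      Real.rpow_add two_pos]

theorem continuous_modelFlow (n lam : ℕ) (x : Fin n → ℝ) :
    Continuous fun t => modelFlow n lam t x := by
  have h2 := Real.continuous_const_rpow (a := 2) two_ne_zero
  refine continuous_pi fun i => ?_
  by_cases hi : (i : ℕ) < lam <;> simp only [modelFlow, hi, if_true, if_false]
  · exact h2.mul continuous_const
  · exact (h2.comp continuous_neg).mul continuous_const

theorem tendsto_rpow_mul_atTop_nhds_zero_iff {b c : ℝ} (hb : 1 < b) :
    Tendsto (fun t : ℝ => b ^ t * c) atTop (𝓝 0) ↔ c = 0 := by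
  refine ⟨fun hc => ?_, fun hc => by simp [hc]⟩
  have hdecay : Tendsto (fun t : ℝ => b ^ (-t)) atTop (𝓝 0) :=
    (tendsto_rpow_atBot_of_base_gt_one b hb).comp tendsto_neg_atTop_atBot
  have hprod : ∀ t : ℝ, b ^ (-t) * (b ^ t * c) = c := fun t => by
    rw [← mul_assoc, ← Real.rpow_add (by linarith), neg_add_cancel, Real.rpow_zero, one_mul]
  simpa [hprod] using hdecay.mul hc

theorem unstableSet_modelFlow (n lam : ℕ) :
    unstableSet (modelFlow n lam) 0 = {z | ∀ i : Fin n, lam ≤ i → z i = 0} := by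
  ext z
  simp only [unstableSet, mem_ofPred_eq, tendsto_pi_nhds]
  refine forall_congr' fun i => ?_
  by_cases hi : (i : ℕ) < lam
  · simp only [modelFlow, hi, if_true, neg_neg, not_le.2 hi, false_implies, iff_true]
    simpa using ((tendsto_rpow_atBot_of_base_gt_one 2 one_lt_two).comp
      tendsto_neg_atTop_atBot).mul_const (z i)
  · simp only [modelFlow, hi, if_false, neg_neg, not_lt.1 hi, true_implies]
    exact tendsto_rpow_mul_atTop_nhds_zero_iff one_lt_two

section zeroExtend

variable {α : Type*} [Zero α] {m : ℕ}

def zeroExtend (n : ℕ) (x : Fin m → α) : Fin n → α :=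
  fun i => if hi : (i : ℕ) < m then x ⟨i, hi⟩ else 0

theorem range_zeroExtend {n : ℕ} (hmn : m ≤ n) :
    range (zeroExtend n : (Fin m → α) → _) = {z | ∀ i : Fin n, m ≤ i → z i = 0} := by
  ext z
  constructor
  · rintro ⟨x, rfl⟩ i hi
    simp [zeroExtend, not_lt.2 hi]
  · intro hz
    refine ⟨fun j => z (Fin.castLE hmn j), funext fun i => ?_⟩
    by_cases hi : (i : ℕ) < m
    · simp [zeroExtend, hi]
    · simp [zeroExtend, hi, hz i (not_lt.1 hi)]

theorem isEmbedding_zeroExtend [TopologicalSpace α] {n : ℕ} (hmn : m ≤ n) :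
    IsEmbedding (zeroExtend n : (Fin m → α) → _) := by
  refine Function.LeftInverse.isEmbedding (f := fun z j => z (Fin.castLE hmn j))
    (fun x => funext fun j => by simp [zeroExtend]) (by fun_prop)
    (continuous_pi fun i => by unfold zeroExtend; split <;> fun_prop)

end zeroExtend

theorem stmt17_general {M : Type*} [MetricSpace M] (n : ℕ)
    (f : ℝ → M → M)
    (hf_cont : Continuous fun q : ℝ × M => f q.1 q.2)
    (hf_zero : ∀ x, f 0 x = x)
    (hf_add : ∀ s t : ℝ, ∀ x, f t (f s x) = f (t + s) x)
    (p : M) (lam : ℕ) (hp : IsTopHyperbolicFixedPt n f p lam) :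
    ∃ J : (Fin lam → ℝ) → M,
      Function.Injective J ∧ Continuous J ∧ Set.range J = unstableSet f p ∧
      ∀ x : Fin lam → ℝ, ∃ Ux : Set (Fin lam → ℝ), IsOpen Ux ∧ x ∈ Ux ∧
        ∃ e : ↥Ux ≃ₜ ↥(J '' Ux), ∀ y : ↥Ux, (e y : M) = J y := by
  obtain ⟨hlam, -, U, hU, hpU, h, hh0, hconj⟩ := hp
  have hflow : ∀ y (hy : y ∈ U) t, f t y = h.symm (modelFlow n lam t (h ⟨y, hy⟩)) :=
    fun _ hy => IsChartConj.flow_eq hconj hf_cont hf_zero hf_add (continuous_modelFlow n lam)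
      (modelFlow_add n lam) hU hy
  set J := fun x : Fin lam → ℝ => (h.symm (zeroExtend n x) : M)
  have hJ : IsEmbedding J :=
    IsEmbedding.subtypeVal.comp (h.symm.isEmbedding.comp (isEmbedding_zeroExtend hlam))
  refine ⟨J, hJ.injective, hJ.continuous, ?_,
    fun x => ⟨univ, isOpen_univ, mem_univ x, hJ.homeomorphImage univ, fun _ => rfl⟩⟩
  rw [unstableSet_eq_image_of_flow_eq hU hpU h hf_zero hf_add hflow, hh0,
    unstableSet_modelFlow, ← range_zeroExtend hlam, ← range_comp]
  rfl

/-- The unstable manifold of a topologically hyperbolic fixed point of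
index `lam` is the image of an injective continuous immersion `J : ℝ^lam → M`. -/
theorem stmt17 {M : Type*} [MetricSpace M] [CompactSpace M] (n : ℕ)
    (hM : LocallyEuclidean n M)
    (f : ℝ → M → M)
    (hf_cont : Continuous fun q : ℝ × M => f q.1 q.2)
    (hf_zero : ∀ x, f 0 x = x)
    (hf_add : ∀ s t : ℝ, ∀ x, f t (f s x) = f (t + s) x)
    (p : M) (lam : ℕ) (hp : IsTopHyperbolicFixedPt n f p lam) :
    ∃ J : (Fin lam → ℝ) → M,
      Function.Injective J ∧ Continuous J ∧ Set.range J = unstableSet f p ∧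
      ∀ x : Fin lam → ℝ, ∃ Ux : Set (Fin lam → ℝ), IsOpen Ux ∧ x ∈ Ux ∧
        ∃ e : ↥Ux ≃ₜ ↥(J '' Ux), ∀ y : ↥Ux, (e y : M) = J y :=
  stmt17_general n f hf_cont hf_zero hf_add p lam hp
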